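/- If β ≥ γ ≥ 0 and β + γ > 1, then for all integers k₁, k₂, the sum over n ∈ ℤ of 1/(⟨n-k₁⟩^β ⟨n-k₂⟩^γ) is bounded by C · φ_β(k₁-k₂)/⟨k₁-k₂⟩^γ, where φ_β(k) = Σ_{|n|≤|k|} ⟨n⟩^{-β} and ⟨n⟩ = (1+n²)^{1/2}, with C depending only on β, γ. -/

import Mathlib

open scoped BigOperators

/-- Japanese bracket `⟨x⟩ = (1+x²)^{1/2}`. -/
noncomputable def jb (x : ℝ) : ℝ := Real.sqrt (1 + x ^ 2)

/-- `φ_β(k) = Σ_{|n| ≤ |k|} ⟨n⟩^{-β}`. -/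
noncomputable def phiB (β : ℝ) (k : ℤ) : ℝ :=
  ∑ n ∈ Finset.Icc (-|k|) |k|, jb (n : ℝ) ^ (-β)

/-!
Write `K = |k₁ - k₂|`, `a = n - k₁`, `b = n - k₂`, so that `|a| + |b| ≥ K`. The larger of
`|a|, |b|` is at least `K / 2` and at least the smaller one `m`; since `γ ≤ β` the exponent `β` may
be moved onto `m`, and each term is at most `2^γ ⟨K⟩^{-γ} ⟨m⟩^{-β}` if `|m| ≤ K` and
`⟨m⟩^{-(β+γ)}` otherwise (`splitWeight`). Summed over `m`, the first part is
`2^γ ⟨K⟩^{-γ} φ_β(K)`, and by the integral test (`β + γ > 1`) the second is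
`≲ ⟨K⟩^{1-β-γ} ≤ ⟨K⟩^{-γ} φ_β(K)`, because `φ_β(K)` has `2K + 1 ≥ ⟨K⟩` terms, each `≥ ⟨K⟩^{-β}`.
-/

open Finset

lemma jb_pos (x : ℝ) : 0 < jb x := Real.sqrt_pos.2 (by positivity)

lemma jb_abs (x : ℝ) : jb |x| = jb x := by rw [jb, jb, sq_abs]

lemma jb_le_jb {x y : ℝ} (h : |x| ≤ |y|) : jb x ≤ jb y :=
  Real.sqrt_le_sqrt (by nlinarith [sq_abs x, sq_abs y, abs_nonneg x])

lemma jb_le_two_mul_jb {x y : ℝ} (h : |x| ≤ 2 * |y|) : jb x ≤ 2 * jb y := by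
  rw [jb, jb, ← Real.sqrt_sq zero_le_two, ← Real.sqrt_mul (sq_nonneg 2)]
  exact Real.sqrt_le_sqrt (by nlinarith [sq_abs x, sq_abs y, abs_nonneg x])

lemma jb_le_abs_add_one (x : ℝ) : jb x ≤ |x| + 1 := by
  rw [jb, Real.sqrt_le_left (by positivity)]
  nlinarith [sq_abs x, abs_nonneg x]

lemma abs_add_one_le_two_mul_jb (x : ℝ) : |x| + 1 ≤ 2 * jb x := by
  rw [jb, ← Real.sqrt_sq zero_le_two, ← Real.sqrt_mul (sq_nonneg 2),
    Real.le_sqrt (by positivity) (by positivity)]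
  nlinarith [sq_abs x, sq_nonneg (|x| - 1)]

lemma rpow_neg_le_two_rpow_mul_rpow_neg {u v γ : ℝ} (hγ : 0 ≤ γ) (hu : 0 < u) (h : u ≤ 2 * v) :
    v ^ (-γ) ≤ 2 ^ γ * u ^ (-γ) := by
  calc v ^ (-γ) ≤ (u / 2) ^ (-γ) :=
        Real.rpow_le_rpow_of_nonpos (by linarith) (by linarith) (by linarith)
    _ = 2 ^ γ * u ^ (-γ) := by
        rw [Real.div_rpow hu.le zero_le_two, Real.rpow_neg zero_le_two, div_inv_eq_mul, mul_comm]

lemma jb_rpow_neg_le_of_abs_le {x y s : ℝ} (hs : 0 ≤ s) (h : |x| ≤ |y|) :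
    jb y ^ (-s) ≤ jb x ^ (-s) :=
  Real.rpow_le_rpow_of_nonpos (jb_pos x) (jb_le_jb h) (neg_nonpos.2 hs)

noncomputable def splitWeight (β γ k x : ℝ) : ℝ :=
  if |x| ≤ k then 2 ^ γ * jb k ^ (-γ) * jb x ^ (-β) else jb x ^ (-(β + γ))

lemma splitWeight_nonneg (β γ k x : ℝ) : 0 ≤ splitWeight β γ k x := by
  unfold splitWeight
  split_ifs <;> have := jb_pos x <;> have := jb_pos k <;> positivity

lemma mul_le_splitWeight {β γ k x y : ℝ} (hγ : 0 ≤ γ) (hxy : |x| ≤ |y|) (hk : |k| ≤ 2 * |y|) :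
    jb x ^ (-β) * jb y ^ (-γ) ≤ splitWeight β γ k x := by
  unfold splitWeight
  split_ifs
  · rw [mul_comm]
    exact mul_le_mul_of_nonneg_right
      (rpow_neg_le_two_rpow_mul_rpow_neg hγ (jb_pos k) (jb_le_two_mul_jb hk))
      (Real.rpow_nonneg (jb_pos x).le _)
  · rw [neg_add, Real.rpow_add (jb_pos x)]
    exact mul_le_mul_of_nonneg_left (jb_rpow_neg_le_of_abs_le hγ hxy)
      (Real.rpow_nonneg (jb_pos x).le _)

lemma jb_rpow_mul_jb_rpow_le_swap {β γ x y : ℝ} (hβγ : γ ≤ β) (h : |y| ≤ |x|) :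
    jb x ^ (-β) * jb y ^ (-γ) ≤ jb y ^ (-β) * jb x ^ (-γ) := by
  have hx := jb_pos x
  have hy := jb_pos y
  have split (z : ℝ) (hz : 0 < z) : z ^ (-β) = z ^ (-(β - γ)) * z ^ (-γ) := by
    rw [← Real.rpow_add hz]; ring_nf
  calc jb x ^ (-β) * jb y ^ (-γ) = jb x ^ (-(β - γ)) * (jb x ^ (-γ) * jb y ^ (-γ)) := by
        rw [split _ hx]; ring
    _ ≤ jb y ^ (-(β - γ)) * (jb x ^ (-γ) * jb y ^ (-γ)) :=
        mul_le_mul_of_nonneg_right (jb_rpow_neg_le_of_abs_le (sub_nonneg.2 hβγ) h)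
          (by positivity)
    _ = jb y ^ (-β) * jb x ^ (-γ) := by rw [split _ hy]; ring

lemma mul_le_splitWeight_add {β γ k a b : ℝ} (hγ : 0 ≤ γ) (hβγ : γ ≤ β)
    (hk : |k| ≤ |a| + |b|) :
    jb a ^ (-β) * jb b ^ (-γ) ≤ splitWeight β γ k a + splitWeight β γ k b := by
  rcases le_total |a| |b| with hab | hba
  · linarith [mul_le_splitWeight (β := β) (k := k) hγ hab (by linarith),
      splitWeight_nonneg β γ k b]
  · linarith [jb_rpow_mul_jb_rpow_le_swap hβγ hba,
      mul_le_splitWeight (β := β) (k := k) hγ hba (by linarith), splitWeight_nonneg β γ k a]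

lemma sum_nat_add_one_rpow_neg_le {s : ℝ} (hs : 1 < s) (K : ℕ) (H : Finset ℕ)
    (hH : ∀ j ∈ H, K < j) :
    ∑ j ∈ H, ((j : ℝ) + 1) ^ (-s) ≤ ((K : ℝ) + 1) ^ (1 - s) / (s - 1) := by
  have hK : (0 : ℝ) < K + 1 := by positivity
  have hsub : H ⊆ Ico (K + 1) (H.sup id + 1) := fun j hj =>
    mem_Ico.2 ⟨hH j hj, Nat.lt_succ_of_le (le_sup (f := id) hj)⟩
  have anti : AntitoneOn (fun x : ℝ => x ^ (-s)) (Set.Ici ((K + 1 : ℕ) : ℝ)) :=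
    fun x hx y _ hxy => Real.rpow_le_rpow_of_nonpos
      (lt_of_lt_of_le (by positivity) (Set.mem_Ici.1 hx)) hxy (by linarith)
  calc ∑ j ∈ H, ((j : ℝ) + 1) ^ (-s)
      ≤ ∑ j ∈ Ico (K + 1) (H.sup id + 1), (((j + 1 : ℕ) : ℝ)) ^ (-s) := by
        push_cast
        exact sum_le_sum_of_subset_of_nonneg hsub fun j _ _ => by positivity
    _ ≤ ∫ x in Set.Ioi ((K + 1 : ℕ) : ℝ), x ^ (-s) :=
        (anti.mono Set.Icc_subset_Ici_self).sum_Ico_le_integral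
          (integrableOn_Ioi_rpow_of_lt (by linarith) (by positivity))
          fun t ht => Real.rpow_nonneg (lt_trans (by positivity) ht).le _
    _ = ((K : ℝ) + 1) ^ (1 - s) / (s - 1) := by
        rw [integral_Ioi_rpow_of_lt (by linarith) (by positivity)]
        push_cast
        rw [show -s + 1 = 1 - s by ring, neg_div, ← div_neg, neg_sub]

lemma sum_comp_natAbs_eq {M : Type*} [AddCommMonoid M] {F : ℕ → M} (G : Finset ℤ) :
    ∑ m ∈ G, F m.natAbs = ∑ j ∈ (G.filter (0 ≤ ·)).image Int.natAbs, F j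
      + ∑ j ∈ (G.filter (¬ 0 ≤ ·)).image Int.natAbs, F j := by
  rw [sum_image (fun a ha b hb h => by simp only [coe_filter, Set.mem_ofPred_eq] at ha hb; omega),
    sum_image (fun a ha b hb h => by simp only [coe_filter, Set.mem_ofPred_eq] at ha hb; omega),
    sum_filter_add_sum_filter_not]

lemma sum_jb_rpow_neg_le {s : ℝ} (hs : 1 < s) (K : ℕ) (G : Finset ℤ)
    (hG : ∀ m ∈ G, K < m.natAbs) :
    ∑ m ∈ G, jb m ^ (-s) ≤ 2 ^ (s + 1) / (s - 1) * ((K : ℝ) + 1) ^ (1 - s) := by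
  have tail (H : Finset ℕ) (hH : H ⊆ G.image Int.natAbs) :
      ∑ j ∈ H, ((j : ℝ) + 1) ^ (-s) ≤ ((K : ℝ) + 1) ^ (1 - s) / (s - 1) := by
    refine sum_nat_add_one_rpow_neg_le hs K H fun j hj => ?_
    obtain ⟨m, hm, rfl⟩ := mem_image.1 (hH hj)
    exact hG m hm
  calc ∑ m ∈ G, jb m ^ (-s) ≤ ∑ m ∈ G, 2 ^ s * ((m.natAbs : ℝ) + 1) ^ (-s) := by
        refine sum_le_sum fun m _ => rpow_neg_le_two_rpow_mul_rpow_neg (by linarith)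
          (by positivity) ?_
        rw [Nat.cast_natAbs, Int.cast_abs]
        exact abs_add_one_le_two_mul_jb _
    _ = 2 ^ s * (∑ j ∈ (G.filter (0 ≤ ·)).image Int.natAbs, ((j : ℝ) + 1) ^ (-s)
          + ∑ j ∈ (G.filter (¬ 0 ≤ ·)).image Int.natAbs, ((j : ℝ) + 1) ^ (-s)) := by
        rw [← mul_sum, sum_comp_natAbs_eq (F := fun j : ℕ => ((j : ℝ) + 1) ^ (-s))]
    _ ≤ 2 ^ s * (((K : ℝ) + 1) ^ (1 - s) / (s - 1) + ((K : ℝ) + 1) ^ (1 - s) / (s - 1)) := by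
        gcongr <;> exact tail _ (image_subset_image (filter_subset _ _))
    _ = 2 ^ (s + 1) / (s - 1) * ((K : ℝ) + 1) ^ (1 - s) := by
        rw [Real.rpow_add_one two_ne_zero]; ring

lemma jb_rpow_le_phiB {β : ℝ} (hβ : 0 ≤ β) (k : ℤ) : jb k ^ (1 - β) ≤ phiB β k := by
  have hterm : ∀ n ∈ Icc (-|k|) |k|, jb k ^ (-β) ≤ jb n ^ (-β) := fun n hn => by
    refine jb_rpow_neg_le_of_abs_le hβ ?_
    rw [← Int.cast_abs, ← Int.cast_abs]
    exact_mod_cast abs_le.2 (mem_Icc.1 hn)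
  have hcard : jb k ≤ #(Icc (-|k|) |k|) := by
    rw [← Int.cast_natCast, Int.card_Icc_of_le _ _ (by linarith [abs_nonneg k])]
    push_cast
    linarith [jb_le_abs_add_one k, abs_nonneg (k : ℝ)]
  calc jb k ^ (1 - β) = jb k * jb k ^ (-β) := by
        rw [sub_eq_add_neg, Real.rpow_add (jb_pos _), Real.rpow_one]
    _ ≤ #(Icc (-|k|) |k|) • jb k ^ (-β) := by
        rw [nsmul_eq_mul]
        exact mul_le_mul_of_nonneg_right hcard (Real.rpow_nonneg (jb_pos _).le _)
    _ ≤ phiB β k := card_nsmul_le_sum _ _ _ hterm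

lemma sum_filter_le_phiB (β : ℝ) (k : ℤ) (G : Finset ℤ) :
    ∑ m ∈ G.filter (fun m : ℤ => |(m : ℝ)| ≤ |(k : ℝ)|), jb m ^ (-β) ≤ phiB β k := by
  refine sum_le_sum_of_subset_of_nonneg (fun m hm => mem_Icc.2 (abs_le.1 ?_))
    fun m _ _ => Real.rpow_nonneg (jb_pos _).le _
  have := (mem_filter.1 hm).2
  rwa [← Int.cast_abs, ← Int.cast_abs, Int.cast_le] at this

lemma sum_splitWeight_le {β γ : ℝ} (hβ : 0 ≤ β) (hs : 1 < β + γ) (k : ℤ) (G : Finset ℤ) :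
    ∑ m ∈ G, splitWeight β γ |(k : ℝ)| m
      ≤ (2 ^ γ + 2 ^ (β + γ + 1) / (β + γ - 1)) * phiB β k / jb k ^ γ := by
  have hk := jb_pos k
  have near : ∑ m ∈ G.filter (fun m : ℤ => |(m : ℝ)| ≤ |(k : ℝ)|), splitWeight β γ |(k : ℝ)| m
      ≤ 2 ^ γ * jb k ^ (-γ) * phiB β k := by
    rw [sum_congr rfl fun m hm => by rw [splitWeight, if_pos (mem_filter.1 hm).2], ← mul_sum,
      jb_abs]
    exact mul_le_mul_of_nonneg_left (sum_filter_le_phiB β k G) (by positivity)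
  have far : ∑ m ∈ G.filter (fun m : ℤ => ¬ |(m : ℝ)| ≤ |(k : ℝ)|), splitWeight β γ |(k : ℝ)| m
      ≤ 2 ^ (β + γ + 1) / (β + γ - 1) * (jb k ^ (-γ) * phiB β k) := by
    rw [sum_congr rfl fun m hm => by rw [splitWeight, if_neg (mem_filter.1 hm).2]]
    refine (sum_jb_rpow_neg_le hs k.natAbs _ fun m hm => ?_).trans ?_
    · rw [← Nat.cast_lt (α := ℝ), Nat.cast_natAbs, Nat.cast_natAbs, Int.cast_abs, Int.cast_abs]
      exact lt_of_not_ge (mem_filter.1 hm).2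
    · refine mul_le_mul_of_nonneg_left ?_ (div_nonneg (by positivity) (by linarith))
      calc ((k.natAbs : ℝ) + 1) ^ (1 - (β + γ)) ≤ jb k ^ (1 - (β + γ)) := by
            refine Real.rpow_le_rpow_of_nonpos hk ?_ (by linarith)
            rw [Nat.cast_natAbs, Int.cast_abs]
            exact jb_le_abs_add_one _
        _ = jb k ^ (-γ) * jb k ^ (1 - β) := by rw [← Real.rpow_add hk]; ring_nf
        _ ≤ jb k ^ (-γ) * phiB β k :=
            mul_le_mul_of_nonneg_left (jb_rpow_le_phiB hβ k) (by positivity)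
  calc ∑ m ∈ G, splitWeight β γ |(k : ℝ)| m
      ≤ 2 ^ γ * jb k ^ (-γ) * phiB β k
        + 2 ^ (β + γ + 1) / (β + γ - 1) * (jb k ^ (-γ) * phiB β k) := by
        rw [← sum_filter_add_sum_filter_not G (fun m : ℤ => |(m : ℝ)| ≤ |(k : ℝ)|)]
        exact add_le_add near far
    _ = (2 ^ γ + 2 ^ (β + γ + 1) / (β + γ - 1)) * phiB β k / jb k ^ γ := by
        rw [Real.rpow_neg hk.le]; ring

lemma sum_splitWeight_sub_le {β γ : ℝ} (hβ : 0 ≤ β) (hs : 1 < β + γ) (c k : ℤ) (F : Finset ℤ) :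
    ∑ n ∈ F, splitWeight β γ |(k : ℝ)| ((n : ℝ) - c)
      ≤ (2 ^ γ + 2 ^ (β + γ + 1) / (β + γ - 1)) * phiB β k / jb k ^ γ := by
  have shift : ∑ n ∈ F, splitWeight β γ |(k : ℝ)| ((n : ℝ) - c)
      = ∑ m ∈ F.image (· - c), splitWeight β γ |(k : ℝ)| m := by
    rw [sum_image fun a _ b _ h => sub_left_inj.1 h]
    push_cast
    rfl
  exact shift ▸ sum_splitWeight_le hβ hs k _

theorem stmt0 (β γ : ℝ) (hγ : 0 ≤ γ) (hβγ : γ ≤ β) (hsum : 1 < β + γ) :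
    ∃ C > 0, ∀ (k₁ k₂ : ℤ) (F : Finset ℤ),
      ∑ n ∈ F, jb ((n : ℝ) - k₁) ^ (-β) * jb ((n : ℝ) - k₂) ^ (-γ)
        ≤ C * phiB β (k₁ - k₂) / jb ((k₁ : ℝ) - k₂) ^ γ := by
  refine ⟨2 * (2 ^ γ + 2 ^ (β + γ + 1) / (β + γ - 1)),
    mul_pos two_pos (add_pos (by positivity) (div_pos (by positivity) (by linarith))),
    fun k₁ k₂ F => ?_⟩
  have hk (n : ℤ) : |((k₁ - k₂ : ℤ) : ℝ)| ≤ |(n : ℝ) - k₁| + |(n : ℝ) - k₂| := by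
    rw [Int.cast_sub, abs_sub_comm, ← sub_sub_sub_cancel_left _ _ (n : ℝ)]
    exact abs_sub _ _
  calc ∑ n ∈ F, jb ((n : ℝ) - k₁) ^ (-β) * jb ((n : ℝ) - k₂) ^ (-γ)
      ≤ ∑ n ∈ F, (splitWeight β γ |((k₁ - k₂ : ℤ) : ℝ)| ((n : ℝ) - k₁)
          + splitWeight β γ |((k₁ - k₂ : ℤ) : ℝ)| ((n : ℝ) - k₂)) :=
        sum_le_sum fun n _ => mul_le_splitWeight_add hγ hβγ ((abs_abs _).trans_le (hk n))
    _ ≤ 2 * ((2 ^ γ + 2 ^ (β + γ + 1) / (β + γ - 1)) * phiB β (k₁ - k₂)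
          / jb ((k₁ - k₂ : ℤ) : ℝ) ^ γ) := by
        rw [sum_add_distrib, two_mul]
        exact add_le_add (sum_splitWeight_sub_le (hγ.trans hβγ) hsum _ _ F)
          (sum_splitWeight_sub_le (hγ.trans hβγ) hsum _ _ F)
    _ = _ := by push_cast; ring
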